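/- arXiv:2303.04286 — 2 statements merged into one kernel-verified Lean document; each statement's English description precedes it below -/
import Mathlib

section
/- Let (Ω, F, P) be a probability space, X : Ω → Matrix (Fin d₁) (Fin d₂) ℝ square-integrable with E[X] = 0, Y : Ω → ℝ, Ỹ := 1{Y ∈ A₁} − 1{Y ∈ A₂} for disjoint measurable A₁, A₂, λ ≥ 0, and L(u, v, t) := Var(uᵀXv) + λ·E[(1 − Ỹ(uᵀXv − t))₊]. Let U, V be matrices with m := σ(ω ↦ UᵀX(ω)V), suppose Y and X are conditionally independent given m, and suppose that for every (u, v) ∈ ℝ^{d₁} × ℝ^{d₂} there exist η_r ∈ ℝ^{r₁}, η_c ∈ ℝ^{r₂} with E[uᵀXv | m] = (Uη_r)ᵀX(Vη_c) a.s. If (u*, v*, t*) minimizes L over ℝ^{d₁} × ℝ^{d₂} × ℝ, then u*ᵀXv* = E[u*ᵀXv* | m] almost surely; equivalently, there exist η_r, η_c such that u*ᵀXv* = (Uη_r)ᵀX(Vη_c) almost surely. -/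
open MeasureTheory ProbabilityTheory Matrix

noncomputable section

instance {m n : Type*} : MeasurableSpace (Matrix m n ℝ) :=
  inferInstanceAs (MeasurableSpace (m → n → ℝ))

/-- The bilinear form `uᵀ M v = Σ_{i,j} uᵢ M_{ij} vⱼ`. -/
def bilin {d₁ d₂ : ℕ} (u : Fin d₁ → ℝ) (M : Matrix (Fin d₁) (Fin d₂) ℝ) (v : Fin d₂ → ℝ) : ℝ :=
  ∑ i, ∑ j, u i * M i j * v j

/-- The sliced response `Ỹ = 1{Y ∈ A₁} − 1{Y ∈ A₂}`. -/
def sliceLabel {Ω : Type*} (A₁ A₂ : Set ℝ) (Y : Ω → ℝ) (ω : Ω) : ℝ :=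
  A₁.indicator 1 (Y ω) - A₂.indicator 1 (Y ω)

/-- The population PSMM objective
`L(u, v, t) = Var(uᵀXv) + λ·E[(1 − Ỹ(uᵀXv − t))₊]`. -/
def PSMMobj {Ω : Type*} [MeasurableSpace Ω] {d₁ d₂ : ℕ} (μ : Measure Ω)
    (X : Ω → Matrix (Fin d₁) (Fin d₂) ℝ) (Ytil : Ω → ℝ) (lam : ℝ)
    (u : Fin d₁ → ℝ) (v : Fin d₂ → ℝ) (t : ℝ) : ℝ :=
  variance (fun ω => bilin u (X ω) v) μ
    + lam * ∫ ω, max (1 - Ytil ω * (bilin u (X ω) v - t)) 0 ∂μ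

/-- Conditional independence of `Y` and `X` given a sub-σ-algebra `m`:
for all bounded measurable `g, h`, `E[g(Y)h(X) | m] = E[g(Y)|m] ⬝ E[h(X)|m]` a.s. -/
def CondIndepBdd {Ω α : Type*} [MeasurableSpace Ω] [MeasurableSpace α]
    (μ : Measure Ω) (m : MeasurableSpace Ω) (Y : Ω → ℝ) (X : Ω → α) : Prop :=
  ∀ (g : ℝ → ℝ) (h : α → ℝ), Measurable g → Measurable h →
    (∃ C, ∀ x, |g x| ≤ C) → (∃ C, ∀ x, |h x| ≤ C) →
    μ[fun ω => g (Y ω) * h (X ω) | m]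
      =ᵐ[μ] fun ω => (μ[fun ω' => g (Y ω') | m]) ω * (μ[fun ω' => h (X ω') | m]) ω

/-! Write `f = u*ᵀXv*` and `m = σ(UᵀXV)`. By the bilinearity condition `E[f | m]` is itself a
bilinear form `f'`, and by the law of total variance `Var f = Var f' + E[Var(f | m)]`. The hinge
term does not increase when `f` is replaced by `f'`: splitting according to the finitely many values
`s` of `Ỹ`, each piece is `E[1{Ỹ = s} φₛ(f)]` with `φₛ` convex; conditional independence (extended
from bounded to integrable functions of `X` by truncation) lets one replace `1{Ỹ = s}` by its
conditional expectation given `m`, and then conditional Jensen applies.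
Minimality of `(u*, v*, t*)` therefore forces `E[Var(f | m)] = 0`, i.e. `f = E[f | m]` a.s. -/

instance {ι κ : Type*} [Fintype ι] [Fintype κ] : BorelSpace (Matrix ι κ ℝ) :=
  inferInstanceAs (BorelSpace (ι → κ → ℝ))

lemma measurable_mul_mul {ι κ ι' κ' : Type*} [Fintype ι] [Fintype κ] [Fintype ι'] [Fintype κ']
    (A : Matrix ι' ι ℝ) (B : Matrix κ κ' ℝ) : Measurable (fun M : Matrix ι κ ℝ => A * M * B) :=
  (by fun_prop : Continuous (fun M : Matrix ι κ ℝ => A * M * B)).measurable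

section Bilin

variable {d₁ d₂ : ℕ}

lemma measurable_bilin (u : Fin d₁ → ℝ) (v : Fin d₂ → ℝ) :
    Measurable (fun M : Matrix (Fin d₁) (Fin d₂) ℝ => bilin u M v) := by
  unfold bilin; fun_prop

lemma memLp_bilin {Ω : Type*} [MeasurableSpace Ω] {μ : Measure Ω}
    {X : Ω → Matrix (Fin d₁) (Fin d₂) ℝ} (hX : ∀ i j, MemLp (fun ω => X ω i j) 2 μ)
    (u : Fin d₁ → ℝ) (v : Fin d₂ → ℝ) : MemLp (fun ω => bilin u (X ω) v) 2 μ := by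
  unfold bilin
  refine memLp_finsetSum _ fun i _ => memLp_finsetSum _ fun j _ => ?_
  exact ((hX i j).const_mul (u i * v j)).ae_eq (ae_of_all _ fun ω => by ring)

end Bilin

lemma measurable_sliceLabel {A₁ A₂ : Set ℝ} (hA₁ : MeasurableSet A₁) (hA₂ : MeasurableSet A₂) :
    Measurable (sliceLabel A₁ A₂ id) :=
  (measurable_one.indicator hA₁).sub (measurable_one.indicator hA₂)

lemma finite_range_sliceLabel (A₁ A₂ : Set ℝ) : (Set.range (sliceLabel A₁ A₂ id)).Finite := by
  refine (Set.toFinite {-1, 0, 1}).subset ?_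
  rintro _ ⟨y, rfl⟩
  by_cases h₁ : y ∈ A₁ <;> by_cases h₂ : y ∈ A₂ <;> simp [sliceLabel, h₁, h₂]

lemma convexOn_hinge (s t : ℝ) : ConvexOn ℝ Set.univ (fun z : ℝ => max (1 - s * (z - t)) 0) :=
  ((((LinearMap.mulLeft ℝ (-s)).convexOn convex_univ).add_const (1 + s * t)).congr
    fun z _ => by simp only [Pi.add_apply, LinearMap.mulLeft_apply, neg_mul]; ring).sup (convexOn_const 0 convex_univ)

lemma integrable_hinge {Ω : Type*} [MeasurableSpace Ω] {μ : Measure Ω} [IsFiniteMeasure μ]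
    {q : Ω → ℝ} (hq : Integrable q μ) (s t : ℝ) :
    Integrable (fun ω => max (1 - s * (q ω - t)) 0) μ :=
  ((integrable_const 1).sub ((hq.sub (integrable_const t)).const_mul s)).pos_part

lemma hinge_eq_sum_indicator {ℓ : ℝ → ℝ} {S : Finset ℝ} (hS : ∀ y, ℓ y ∈ S) (y z t : ℝ) :
    max (1 - ℓ y * (z - t)) 0
      = ∑ s ∈ S, (ℓ ⁻¹' {s}).indicator 1 y * max (1 - s * (z - t)) 0 := by
  rw [Finset.sum_eq_single_of_mem (ℓ y) (hS y) fun s _ hs => by simp [Ne.symm hs]]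
  simp

section CondIndep

open Filter Topology

variable {Ω α : Type*} {m m0 : MeasurableSpace Ω} {μ : Measure Ω} [MeasurableSpace α]

lemma integral_mul_condExp_of_stronglyMeasurable (hm : m ≤ m0) [SigmaFinite (μ.trim hm)]
    {G F : Ω → ℝ} (hG : StronglyMeasurable[m] G) (hGF : Integrable (G * F) μ)
    (hF : Integrable F μ) :
    ∫ ω, G ω * (μ[F|m]) ω ∂μ = ∫ ω, G ω * F ω ∂μ :=
  calc ∫ ω, G ω * (μ[F|m]) ω ∂μ = ∫ ω, (μ[G * F|m]) ω ∂μ :=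
        integral_congr_ae (condExp_mul_of_stronglyMeasurable_left hG hGF hF).symm
    _ = ∫ ω, G ω * F ω ∂μ := integral_condExp hm

lemma integrable_condExp_mul_of_abs_le {ψ F : Ω → ℝ} {C : ℝ} (hψ : ∀ ω, |ψ ω| ≤ C)
    (hF : Integrable F μ) : Integrable (fun ω => (μ[ψ|m]) ω * F ω) μ :=
  hF.bdd_mul integrable_condExp.1 (ae_bdd_abs_condExp_of_ae_bdd_abs (ae_of_all μ hψ))

variable [IsFiniteMeasure μ] {Y : Ω → ℝ} {X : Ω → α}

lemma ae_eq_condExp_of_integral_condVar_nonpos (hm : m ≤ m0) {f : Ω → ℝ} (hf : MemLp f 2 μ)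
    (hVar : μ[Var[f; μ | m]] ≤ 0) : f =ᵐ[μ] μ[f|m] := by
  have hint : Integrable (fun ω => (f ω - (μ[f|m]) ω) ^ 2) μ :=
    (hf.sub (hf.condExp one_le_two)).integrable_sq
  have hzero : ∫ ω, (f ω - (μ[f|m]) ω) ^ 2 ∂μ = 0 :=
    le_antisymm ((integral_condExp hm).symm.trans_le hVar)
      (integral_nonneg fun ω => sq_nonneg _)
  filter_upwards [(integral_eq_zero_iff_of_nonneg (fun ω => sq_nonneg _) hint).1 hzero] with ω hω
  exact sub_eq_zero.1 (pow_eq_zero_iff two_ne_zero |>.1 hω)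

lemma CondIndepBdd.integral_mul_eq_of_bdd (hm : m ≤ m0) (hCI : CondIndepBdd μ m Y X)
    (hX : Measurable X) {g : ℝ → ℝ} {h : α → ℝ}
    (hg : Measurable g) (hh : Measurable h) {C D : ℝ} (hgC : ∀ y, |g y| ≤ C)
    (hhD : ∀ x, |h x| ≤ D) :
    ∫ ω, g (Y ω) * h (X ω) ∂μ = ∫ ω, (μ[fun ω' => g (Y ω')|m]) ω * h (X ω) ∂μ := by
  have hhX : Integrable (fun ω => h (X ω)) μ :=
    .of_bound (hh.comp hX).aestronglyMeasurable D (ae_of_all μ fun ω => hhD (X ω))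
  calc ∫ ω, g (Y ω) * h (X ω) ∂μ = ∫ ω, (μ[fun ω => g (Y ω) * h (X ω)|m]) ω ∂μ :=
        (integral_condExp hm).symm
    _ = ∫ ω, (μ[fun ω' => g (Y ω')|m]) ω * (μ[fun ω' => h (X ω')|m]) ω ∂μ :=
        integral_congr_ae (hCI g h hg hh ⟨C, hgC⟩ ⟨D, hhD⟩)
    _ = ∫ ω, (μ[fun ω' => g (Y ω')|m]) ω * h (X ω) ∂μ :=
        integral_mul_condExp_of_stronglyMeasurable hm stronglyMeasurable_condExp
          (integrable_condExp_mul_of_abs_le (fun ω => hgC (Y ω)) hhX) hhX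

lemma CondIndepBdd.integral_mul_eq (hm : m ≤ m0) (hCI : CondIndepBdd μ m Y X)
    (hY : Measurable Y) (hX : Measurable X) {g : ℝ → ℝ} {h : α → ℝ}
    (hg : Measurable g) (hh : Measurable h) {C : ℝ} (hgC : ∀ y, |g y| ≤ C)
    (hhX : Integrable (fun ω => h (X ω)) μ) :
    ∫ ω, g (Y ω) * h (X ω) ∂μ = ∫ ω, (μ[fun ω' => g (Y ω')|m]) ω * h (X ω) ∂μ := by
  have htr : ∀ A, Measurable (truncation h A) := fun A =>
    (measurable_id.indicator measurableSet_Ioc).comp hh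
  have tendsto_integral_mul_truncation : ∀ k : Ω → ℝ, AEStronglyMeasurable k μ →
      (∀ᵐ ω ∂μ, |k ω| ≤ C) → Tendsto (fun n : ℕ => ∫ ω, k ω * truncation h n (X ω) ∂μ) atTop
        (𝓝 (∫ ω, k ω * h (X ω) ∂μ)) := by
    intro k hk hkC
    refine tendsto_integral_of_dominated_convergence (fun ω => C * |h (X ω)|)
      (fun n => hk.mul ?_) (hhX.abs.const_mul C) (fun n => ?_) (ae_of_all μ fun ω => ?_)
    · exact ((htr n).comp hX).aestronglyMeasurable
    · filter_upwards [hkC] with ω hω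
      rw [norm_mul, Real.norm_eq_abs, Real.norm_eq_abs]
      exact mul_le_mul hω (abs_truncation_le_abs_self _ _ _) (abs_nonneg _) ((abs_nonneg _).trans hω)
    · refine tendsto_const_nhds.congr' ?_
      filter_upwards [tendsto_natCast_atTop_atTop.eventually_gt_atTop |h (X ω)|] with n hn
      rw [truncation_eq_self hn]
  have hgY : ∀ᵐ ω ∂μ, |g (Y ω)| ≤ C := ae_of_all μ fun ω => hgC (Y ω)
  refine tendsto_nhds_unique
    ((tendsto_integral_mul_truncation _ (hg.comp hY).aestronglyMeasurable hgY).congr fun n => ?_)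
    (tendsto_integral_mul_truncation _ integrable_condExp.1 (ae_bdd_abs_condExp_of_ae_bdd_abs hgY))
  exact hCI.integral_mul_eq_of_bdd hm hX hg (htr n) hgC (abs_truncation_le_bound h n)

lemma CondIndepBdd.integral_mul_convex_comp_le (hm : m ≤ m0) (hCI : CondIndepBdd μ m Y X)
    (hY : Measurable Y) (hX : Measurable X) {g : ℝ → ℝ} (hg : Measurable g) {C : ℝ}
    (hgC : ∀ y, |g y| ≤ C) (hg0 : ∀ y, 0 ≤ g y) {φ : ℝ → ℝ} (hφ : ConvexOn ℝ Set.univ φ)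
    {F F' : α → ℝ} (hF : Measurable F) (hF' : Measurable F')
    (hFX : Integrable (fun ω => F (X ω)) μ) (hφF : Integrable (fun ω => φ (F (X ω))) μ)
    (hφF' : Integrable (fun ω => φ (F' (X ω))) μ)
    (hF'X : (fun ω => F' (X ω)) =ᵐ[μ] μ[fun ω => F (X ω)|m]) :
    ∫ ω, g (Y ω) * φ (F' (X ω)) ∂μ ≤ ∫ ω, g (Y ω) * φ (F (X ω)) ∂μ := by
  have hφm : Measurable φ := (continuousOn_univ.1 (hφ.continuousOn isOpen_univ)).measurable
  have hG0 : 0 ≤ᵐ[μ] μ[fun ω => g (Y ω)|m] := condExp_nonneg (ae_of_all μ fun ω => hg0 (Y ω))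
  have jensen := hφ.map_condExp_le_of_finiteDimensional hm hFX hφF
  have hgY : ∀ ω, |g (Y ω)| ≤ C := fun ω => hgC (Y ω)
  calc ∫ ω, g (Y ω) * φ (F' (X ω)) ∂μ
      = ∫ ω, (μ[fun ω => g (Y ω)|m]) ω * φ (F' (X ω)) ∂μ :=
        hCI.integral_mul_eq hm hY hX hg (hφm.comp hF') hgC hφF'
    _ ≤ ∫ ω, (μ[fun ω => g (Y ω)|m]) ω * (μ[fun ω => φ (F (X ω))|m]) ω ∂μ := by
        refine integral_mono_ae (integrable_condExp_mul_of_abs_le hgY hφF')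
          (integrable_condExp_mul_of_abs_le hgY integrable_condExp) ?_
        filter_upwards [hG0, hF'X, jensen] with ω hG0ω hF'Xω hjensen
        rw [hF'Xω]
        exact mul_le_mul_of_nonneg_left hjensen hG0ω
    _ = ∫ ω, (μ[fun ω => g (Y ω)|m]) ω * φ (F (X ω)) ∂μ :=
        integral_mul_condExp_of_stronglyMeasurable hm stronglyMeasurable_condExp
          (integrable_condExp_mul_of_abs_le hgY hφF) hφF
    _ = ∫ ω, g (Y ω) * φ (F (X ω)) ∂μ :=
        (hCI.integral_mul_eq hm hY hX hg (hφm.comp hF) hgC hφF).symm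

lemma CondIndepBdd.integral_hinge_le (hm : m ≤ m0) (hCI : CondIndepBdd μ m Y X)
    (hY : Measurable Y) (hX : Measurable X) {ℓ : ℝ → ℝ} (hℓ : Measurable ℓ)
    (hℓfin : (Set.range ℓ).Finite) {F F' : α → ℝ} (hF : Measurable F) (hF' : Measurable F')
    (hFX : Integrable (fun ω => F (X ω)) μ)
    (hF'X : (fun ω => F' (X ω)) =ᵐ[μ] μ[fun ω => F (X ω)|m]) (t : ℝ) :
    ∫ ω, max (1 - ℓ (Y ω) * (F' (X ω) - t)) 0 ∂μ
      ≤ ∫ ω, max (1 - ℓ (Y ω) * (F (X ω) - t)) 0 ∂μ := by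
  have hF'Xint : Integrable (fun ω => F' (X ω)) μ := integrable_condExp.congr hF'X.symm
  have hS : ∀ y, ℓ y ∈ hℓfin.toFinset := fun y => hℓfin.mem_toFinset.2 ⟨y, rfl⟩
  have hslice : ∀ s, Measurable ((ℓ ⁻¹' {s}).indicator (1 : ℝ → ℝ)) := fun s =>
    measurable_one.indicator (hℓ (measurableSet_singleton s))
  have hslice_le : ∀ s y, |(ℓ ⁻¹' {s}).indicator (1 : ℝ → ℝ) y| ≤ 1 := fun s y => by
    by_cases hy : y ∈ ℓ ⁻¹' {s} <;> simp [hy]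
  have hterm : ∀ {q : Ω → ℝ}, Integrable q μ → ∀ s, Integrable (fun ω =>
      (ℓ ⁻¹' {s}).indicator 1 (Y ω) * max (1 - s * (q ω - t)) 0) μ := fun hq s =>
    (integrable_hinge hq s t).bdd_mul ((hslice s).comp hY).aestronglyMeasurable
      (ae_of_all μ fun ω => hslice_le s (Y ω))
  simp_rw [hinge_eq_sum_indicator hS]
  rw [integral_finsetSum _ fun s _ => hterm hF'Xint s,
    integral_finsetSum _ fun s _ => hterm hFX s]
  exact Finset.sum_le_sum fun s _ =>
    hCI.integral_mul_convex_comp_le hm hY hX (hslice s) (hslice_le s)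
      (Set.indicator_nonneg fun _ _ => zero_le_one) (convexOn_hinge s t) hF hF'
      hFX (integrable_hinge hFX s t) (integrable_hinge hF'Xint s t) hF'X

end CondIndep

lemma CondIndepBdd.ae_eq_condExp_of_PSMMobj_le {Ω : Type*} {m m0 : MeasurableSpace Ω}
    {μ : Measure Ω} [IsProbabilityMeasure μ] {d₁ d₂ : ℕ} {X : Ω → Matrix (Fin d₁) (Fin d₂) ℝ}
    {Y : Ω → ℝ} (hm : m ≤ m0) (hCI : CondIndepBdd μ m Y X) (hX : Measurable X)
    (hXL2 : ∀ i j, MemLp (fun ω => X ω i j) 2 μ) (hY : Measurable Y) {A₁ A₂ : Set ℝ}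
    (hA₁ : MeasurableSet A₁) (hA₂ : MeasurableSet A₂) {lam : ℝ} (hlam : 0 ≤ lam)
    {u u' : Fin d₁ → ℝ} {v v' : Fin d₂ → ℝ} {t : ℝ}
    (hcond : μ[fun ω => bilin u (X ω) v|m] =ᵐ[μ] fun ω => bilin u' (X ω) v')
    (hle : PSMMobj μ X (sliceLabel A₁ A₂ Y) lam u v t
      ≤ PSMMobj μ X (sliceLabel A₁ A₂ Y) lam u' v' t) :
    (fun ω => bilin u (X ω) v) =ᵐ[μ] μ[fun ω => bilin u (X ω) v|m] := by
  set f := fun ω => bilin u (X ω) v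
  set f' := fun ω => bilin u' (X ω) v'
  have hf : MemLp f 2 μ := memLp_bilin hXL2 u v
  have hinge : ∫ ω, max (1 - sliceLabel A₁ A₂ Y ω * (f' ω - t)) 0 ∂μ
      ≤ ∫ ω, max (1 - sliceLabel A₁ A₂ Y ω * (f ω - t)) 0 ∂μ :=
    hCI.integral_hinge_le hm hY hX (measurable_sliceLabel hA₁ hA₂)
      (finite_range_sliceLabel A₁ A₂) (measurable_bilin u v) (measurable_bilin u' v')
      (hf.integrable one_le_two) hcond.symm t
  have htotal : μ[Var[f; μ | m]] + Var[f'; μ] = Var[f; μ] :=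
    variance_congr hcond ▸ integral_condVar_add_variance_condExp hm hf
  unfold PSMMobj at hle
  refine ae_eq_condExp_of_integral_condVar_nonpos hm hf ?_
  nlinarith [mul_le_mul_of_nonneg_left hinge hlam]

theorem stmt_8_general {Ω : Type*} [MeasurableSpace Ω] {μ : Measure Ω} [IsProbabilityMeasure μ]
    {d₁ d₂ r₁ r₂ : ℕ}
    (X : Ω → Matrix (Fin d₁) (Fin d₂) ℝ) (hX : Measurable X)
    (hXL2 : ∀ i j, MemLp (fun ω => X ω i j) 2 μ)
    (Y : Ω → ℝ) (hY : Measurable Y)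
    (A₁ A₂ : Set ℝ) (hA₁ : MeasurableSet A₁) (hA₂ : MeasurableSet A₂)
    (lam : ℝ) (hlam : 0 ≤ lam)
    (U : Matrix (Fin d₁) (Fin r₁) ℝ) (V : Matrix (Fin d₂) (Fin r₂) ℝ)
    (hCI : CondIndepBdd μ
      (MeasurableSpace.comap (fun ω => Uᵀ * X ω * V) inferInstance) Y X)
    (hbilinear : ∀ (u : Fin d₁ → ℝ) (v : Fin d₂ → ℝ),
      ∃ (ηr : Fin r₁ → ℝ) (ηc : Fin r₂ → ℝ),
        μ[fun ω => bilin u (X ω) v |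
            MeasurableSpace.comap (fun ω => Uᵀ * X ω * V) inferInstance]
          =ᵐ[μ] fun ω => bilin (U.mulVec ηr) (X ω) (V.mulVec ηc))
    (ustar : Fin d₁ → ℝ) (vstar : Fin d₂ → ℝ) (tstar : ℝ)
    (hmin : ∀ (u : Fin d₁ → ℝ) (v : Fin d₂ → ℝ) (t : ℝ),
      PSMMobj μ X (sliceLabel A₁ A₂ Y) lam ustar vstar tstar
        ≤ PSMMobj μ X (sliceLabel A₁ A₂ Y) lam u v t) :
    (fun ω => bilin ustar (X ω) vstar)
      =ᵐ[μ] μ[fun ω => bilin ustar (X ω) vstar |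
          MeasurableSpace.comap (fun ω => Uᵀ * X ω * V) inferInstance] ∧
    ∃ (ηr : Fin r₁ → ℝ) (ηc : Fin r₂ → ℝ),
      (fun ω => bilin ustar (X ω) vstar)
        =ᵐ[μ] fun ω => bilin (U.mulVec ηr) (X ω) (V.mulVec ηc) := by
  obtain ⟨ηr, ηc, hη⟩ := hbilinear ustar vstar
  have hunbiased := hCI.ae_eq_condExp_of_PSMMobj_le ((measurable_mul_mul Uᵀ V).comp hX).comap_le
    hX hXL2 hY hA₁ hA₂ hlam hη (hmin _ _ tstar)
  exact ⟨hunbiased, ηr, ηc, hunbiased.trans hη⟩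

/-- **Theorem 1 (unbiasedness of the PSMM at the population level).**
Under conditional independence `Y ⫫ X | σ(UᵀXV)` and the bilinearity condition, any
minimizer `(u*, v*, t*)` of the population objective `L` satisfies
`u*ᵀXv* = E[u*ᵀXv* | σ(UᵀXV)]` a.s.; equivalently `u*ᵀXv* = (Uη_r)ᵀX(Vη_c)` a.s.
for some `η_r`, `η_c`. -/
theorem stmt_8 {Ω : Type*} [MeasurableSpace Ω] {μ : Measure Ω} [IsProbabilityMeasure μ]
    {d₁ d₂ r₁ r₂ : ℕ}
    (X : Ω → Matrix (Fin d₁) (Fin d₂) ℝ) (hX : Measurable X)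
    (hXL2 : ∀ i j, MemLp (fun ω => X ω i j) 2 μ)
    (hXmean : ∀ i j, ∫ ω, X ω i j ∂μ = 0)
    (Y : Ω → ℝ) (hY : Measurable Y)
    (A₁ A₂ : Set ℝ) (hA₁ : MeasurableSet A₁) (hA₂ : MeasurableSet A₂)
    (hdisj : Disjoint A₁ A₂)
    (lam : ℝ) (hlam : 0 ≤ lam)
    (U : Matrix (Fin d₁) (Fin r₁) ℝ) (V : Matrix (Fin d₂) (Fin r₂) ℝ)
    (hCI : CondIndepBdd μ
      (MeasurableSpace.comap (fun ω => Uᵀ * X ω * V) inferInstance) Y X)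
    (hbilinear : ∀ (u : Fin d₁ → ℝ) (v : Fin d₂ → ℝ),
      ∃ (ηr : Fin r₁ → ℝ) (ηc : Fin r₂ → ℝ),
        μ[fun ω => bilin u (X ω) v |
            MeasurableSpace.comap (fun ω => Uᵀ * X ω * V) inferInstance]
          =ᵐ[μ] fun ω => bilin (U.mulVec ηr) (X ω) (V.mulVec ηc))
    (ustar : Fin d₁ → ℝ) (vstar : Fin d₂ → ℝ) (tstar : ℝ)
    (hmin : ∀ (u : Fin d₁ → ℝ) (v : Fin d₂ → ℝ) (t : ℝ),
      PSMMobj μ X (sliceLabel A₁ A₂ Y) lam ustar vstar tstar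
        ≤ PSMMobj μ X (sliceLabel A₁ A₂ Y) lam u v t) :
    (fun ω => bilin ustar (X ω) vstar)
      =ᵐ[μ] μ[fun ω => bilin ustar (X ω) vstar |
          MeasurableSpace.comap (fun ω => Uᵀ * X ω * V) inferInstance] ∧
    ∃ (ηr : Fin r₁ → ℝ) (ηc : Fin r₂ → ℝ),
      (fun ω => bilin ustar (X ω) vstar)
        =ᵐ[μ] fun ω => bilin (U.mulVec ηr) (X ω) (V.mulVec ηc) :=
  stmt_8_general X hX hXL2 Y hY A₁ A₂ hA₁ hA₂ lam hlam U V hCI hbilinear ustar vstar tstar hmin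
end
end

section
/- Let Σ_r ∈ Matrix (Fin d₁) (Fin d₁) ℝ, Σ_c ∈ Matrix (Fin d₂) (Fin d₂) ℝ be symmetric positive definite, X₁, …, X_n ∈ Matrix (Fin d₁) (Fin d₂) ℝ with mean X̄, labels Ỹ₁, …, Ỹ_n ∈ {−1, 1}, λ > 0, and fix u ∈ ℝ^{d₁} with u ≠ 0. Suppose (v*, t*) minimizes over (v, t) ∈ ℝ^{d₂} × ℝ the function (uᵀΣ_r u)(vᵀΣ_c v) + (λ/n)·Σᵢ (1 − Ỹᵢ(uᵀ(Xᵢ − X̄)v − t))₊. Then there exist β₁, …, β_n ∈ ℝ with 0 ≤ βᵢ ≤ λ/n for all i and Σᵢ βᵢỸᵢ = 0, such that v* = (1/2)·Σᵢ (βᵢỸᵢ)·Σ_c⁻¹(Xᵢ − X̄)ᵀu / (uᵀΣ_r u), and (β₁, …, β_n) minimizes the dual objective −Σᵢ βᵢ + (1/4)·Σᵢ Σⱼ βᵢβⱼỸᵢỸⱼ·((Xᵢ − X̄)ᵀu)ᵀΣ_c⁻¹((Xⱼ − X̄)ᵀu)/(uᵀΣ_r u) over all β satisfying these constraints. -/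
open Matrix

noncomputable section

/-- Sample mean of data matrices. -/
def sampleMean {n d₁ d₂ : ℕ} (X : Fin n → Matrix (Fin d₁) (Fin d₂) ℝ) :
    Matrix (Fin d₁) (Fin d₂) ℝ :=
  (n : ℝ)⁻¹ • ∑ i, X i

/-- The dual objective of the `v`-update quadratic program:
`D(β) = −Σᵢ βᵢ + (1/4) Σᵢ Σⱼ βᵢβⱼỸᵢỸⱼ ((Xᵢ−X̄)ᵀu)ᵀΣ_c⁻¹((Xⱼ−X̄)ᵀu) / (uᵀΣ_r u)`. -/
def dualObjV {n d₁ d₂ : ℕ} (Sr : Matrix (Fin d₁) (Fin d₁) ℝ)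
    (Sc : Matrix (Fin d₂) (Fin d₂) ℝ) (X : Fin n → Matrix (Fin d₁) (Fin d₂) ℝ)
    (Ytil : Fin n → ℝ) (u : Fin d₁ → ℝ) (β : Fin n → ℝ) : ℝ :=
  -∑ i, β i + (1 / 4) * ∑ i, ∑ j, β i * β j * Ytil i * Ytil j *
    (((X i - sampleMean X)ᵀ.mulVec u) ⬝ᵥ (Sc⁻¹.mulVec ((X j - sampleMean X)ᵀ.mulVec u)))
      / bilin u Sr u

/-!
With `Q = uᵀ Σ_r u`, `c = λ / n` and `mᵢ = (Xᵢ - X̄)ᵀ u`, the problem is to minimize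
`P(v, t) = Q vᵀ Σ_c v + c Σᵢ (1 - Ỹᵢ (mᵢ ⬝ v - t))₊`. At a minimizer `(v₀, t₀)` every one-sided
directional derivative of `P` is nonnegative, and the derivative of the `i`-th hinge term is a
maximum of `βᵢ · (direction)` over its subdifferential, an interval. Hence `(2Q Σ_c v₀, 0)` lies
in every closed half-space containing the image of the product of these intervals under
`β ↦ (Σᵢ βᵢỸᵢ mᵢ, Σᵢ βᵢỸᵢ)`, so by Hahn–Banach it lies in this compact convex image: that gives the
KKT multipliers `β`. Completing the square, `w ⬝ v - Q vᵀ Σ_c v ≤ (4Q)⁻¹ wᵀ Σ_c⁻¹ w`, yields weak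
duality `-D(γ) ≤ P(v, t)` for every dual-feasible `γ`, while complementary slackness gives
`D(β) = -P(v₀, t₀)`.
-/

open Filter Topology

/-- The subdifferential of `y ↦ c * max y 0` at `x`, when `0 ≤ c`. -/
def hingeSubdiff (c x : ℝ) : Set ℝ :=
  Set.Icc (if 0 < x then c else 0) (if x < 0 then 0 else c)

theorem hingeSubdiff_subset_Icc {c : ℝ} (hc : 0 ≤ c) (x : ℝ) :
    hingeSubdiff c x ⊆ Set.Icc 0 c := by
  intro β ⟨hl, hr⟩
  constructor <;> split_ifs at hl hr <;> linarith

theorem mul_eq_of_mem_hingeSubdiff {c x β : ℝ} (hβ : β ∈ hingeSubdiff c x) :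
    β * x = c * max x 0 := by
  obtain ⟨hl, hr⟩ := hβ
  rcases lt_trichotomy x 0 with hx | rfl | hx
  · simp only [hx, if_true, not_lt_of_gt hx, if_false] at hl hr
    rw [le_antisymm hr hl, max_eq_right hx.le]; ring
  · simp
  · simp only [hx, if_true, not_lt_of_gt hx, if_false] at hl hr
    rw [le_antisymm hr hl, max_eq_left hx.le]

theorem mul_le_mul_max_zero {c x β : ℝ} (hβ : β ∈ Set.Icc 0 c) : β * x ≤ c * max x 0 := by
  rcases le_total x 0 with hx | hx
  · rw [max_eq_right hx, mul_zero]; exact mul_nonpos_of_nonneg_of_nonpos hβ.1 hx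
  · rw [max_eq_left hx]; exact mul_le_mul_of_nonneg_right hβ.2 hx

/-- `β` maximizes `β * d` over the subdifferential; the hinge is piecewise linear, so the
first-order expansion is exact for small `ε > 0`. -/
theorem exists_mem_hingeSubdiff_eventually_eq {c : ℝ} (hc : 0 ≤ c) (x d : ℝ) :
    ∃ β ∈ hingeSubdiff c x,
      ∀ᶠ ε in 𝓝[>] (0 : ℝ), c * max (x + ε * d) 0 = c * max x 0 + ε * (β * d) := by
  have hlim : Tendsto (fun ε : ℝ => x + ε * d) (𝓝[>] 0) (𝓝 x) :=
    (Continuous.tendsto' (by fun_prop) 0 x (by simp)).mono_left nhdsWithin_le_nhds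
  rcases lt_trichotomy x 0 with hx | rfl | hx
  · refine ⟨0, by simp [hingeSubdiff, hx, not_lt_of_gt hx], ?_⟩
    filter_upwards [hlim.eventually (gt_mem_nhds hx)] with ε hε
    rw [max_eq_right hε.le, max_eq_right hx.le]; ring
  · by_cases hd : 0 ≤ d
    · refine ⟨c, by simp [hingeSubdiff, hc], ?_⟩
      filter_upwards [self_mem_nhdsWithin] with ε hε
      rw [zero_add, max_eq_left (mul_nonneg (le_of_lt hε) hd), max_self]; ring
    · refine ⟨0, by simp [hingeSubdiff, hc], ?_⟩
      filter_upwards [self_mem_nhdsWithin] with ε hε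
      rw [zero_add, max_eq_right (mul_nonpos_of_nonneg_of_nonpos (le_of_lt hε) (by linarith)),
        max_self]; ring
  · refine ⟨c, by simp [hingeSubdiff, hx, not_lt_of_gt hx], ?_⟩
    filter_upwards [hlim.eventually (lt_mem_nhds hx)] with ε hε
    rw [max_eq_left hε.le, max_eq_left hx.le]; ring

theorem nonneg_of_eventually_nonneg_mul_add_sq {A B : ℝ}
    (h : ∀ᶠ ε in 𝓝[>] (0 : ℝ), 0 ≤ ε * A + ε ^ 2 * B) : 0 ≤ A := by
  have hlim : Tendsto (fun ε : ℝ => A + ε * B) (𝓝[>] 0) (𝓝 A) :=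
    (Continuous.tendsto' (by fun_prop) 0 A (by simp)).mono_left nhdsWithin_le_nhds
  refine ge_of_tendsto hlim ?_
  filter_upwards [h, self_mem_nhdsWithin] with ε hε hpos
  refine nonneg_of_mul_nonneg_right ?_ (Set.mem_Ioi.1 hpos)
  linarith [show ε * A + ε ^ 2 * B = (A + ε * B) * ε by ring]

theorem Matrix.IsSymm.mulVec_dotProduct {κ : Type*} [Fintype κ] {S : Matrix κ κ ℝ}
    (hS : S.IsSymm) (x y : κ → ℝ) : S *ᵥ x ⬝ᵥ y = x ⬝ᵥ S *ᵥ y := by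
  rw [dotProduct_mulVec x, ← mulVec_transpose, hS.eq]

theorem Matrix.IsSymm.add_smul_dotProduct_mulVec_add_smul {κ : Type*} [Fintype κ]
    {S : Matrix κ κ ℝ} (hS : S.IsSymm) (v w : κ → ℝ) (ε : ℝ) :
    (v + ε • w) ⬝ᵥ S *ᵥ (v + ε • w) =
      v ⬝ᵥ S *ᵥ v + 2 * ε * (S *ᵥ v ⬝ᵥ w) + ε ^ 2 * (w ⬝ᵥ S *ᵥ w) := by
  simp only [mulVec_add, mulVec_smul, add_dotProduct, dotProduct_add, dotProduct_smul,
    smul_dotProduct, smul_eq_mul, hS.mulVec_dotProduct v w]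
  rw [← hS.mulVec_dotProduct w v, dotProduct_comm (S *ᵥ w) v]
  ring

theorem exists_prod_apply_eq_dotProduct_add {κ : Type*} [Fintype κ] [DecidableEq κ]
    (φ : (κ → ℝ) × ℝ →ₗ[ℝ] ℝ) : ∃ w s, ∀ z a, φ (z, a) = z ⬝ᵥ w + a * s := by
  refine ⟨fun j => φ (Pi.single j 1, 0), φ (0, 1), fun z a => ?_⟩
  have hsingle (i : κ) : (fun j => if i = j then (1 : ℝ) else 0) = Pi.single i 1 := by
    ext j; simp [Pi.single_apply, eq_comm]
  have h := (φ.comp (LinearMap.inl ℝ _ ℝ)).pi_apply_eq_sum_univ z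
  simp only [hsingle, LinearMap.comp_apply, LinearMap.inl_apply, smul_eq_mul] at h
  rw [show ((z, a) : (κ → ℝ) × ℝ) = (z, 0) + a • (0, 1) by simp, map_add, map_smul, h,
    smul_eq_mul, dotProduct]

theorem dotProduct_sub_mul_dotProduct_mulVec_le {κ : Type*} [Fintype κ] [DecidableEq κ]
    {S : Matrix κ κ ℝ} (hS : S.PosDef) {Q : ℝ} (hQ : 0 < Q) (v w : κ → ℝ) :
    w ⬝ᵥ v - Q * (v ⬝ᵥ S *ᵥ v) ≤ (4 * Q)⁻¹ * (w ⬝ᵥ S⁻¹ *ᵥ w) := by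
  have hsymm : S.IsSymm := isHermitian_iff_isSymm.1 hS.isHermitian
  set a := S⁻¹ *ᵥ w
  have hSa : S *ᵥ a = w := by
    rw [mulVec_mulVec, mul_nonsing_inv _ (isUnit_iff_ne_zero.2 hS.det_pos.ne'), one_mulVec]
  have haS : a ⬝ᵥ S *ᵥ v = w ⬝ᵥ v := by rw [← hsymm.mulVec_dotProduct, hSa]
  set z := v - (2 * Q)⁻¹ • a
  have hz : 0 ≤ z ⬝ᵥ S *ᵥ z := by simpa using hS.posSemidef.dotProduct_mulVec_nonneg z
  have hexp : z ⬝ᵥ S *ᵥ z = v ⬝ᵥ S *ᵥ v - Q⁻¹ * (w ⬝ᵥ v) + (4 * Q ^ 2)⁻¹ * (w ⬝ᵥ a) := by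
    simp only [z, mulVec_sub, mulVec_smul, sub_dotProduct, dotProduct_sub, smul_dotProduct,
      dotProduct_smul, hSa, haS, smul_eq_mul, dotProduct_comm a w, dotProduct_comm v w]
    field_simp
    ring
  have := mul_nonneg hQ.le hz
  rw [hexp] at this
  field_simp at this ⊢
  nlinarith

section HingeProgram

variable {ι κ : Type*} [Fintype ι] [Fintype κ]
  (Q c : ℝ) (S : Matrix κ κ ℝ) (m : ι → κ → ℝ) (Y : ι → ℝ)

def hingeObjective (v : κ → ℝ) (t : ℝ) : ℝ :=
  Q * (v ⬝ᵥ S *ᵥ v) + c * ∑ i, max (1 - Y i * (m i ⬝ᵥ v - t)) 0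

variable {Q c S m Y}

theorem sum_mul_hinge_arg_eq {γ : ι → ℝ} (hγY : ∑ i, γ i * Y i = 0) (v : κ → ℝ) (t : ℝ) :
    ∑ i, γ i * (1 - Y i * (m i ⬝ᵥ v - t)) = ∑ i, γ i - (∑ i, (γ i * Y i) • m i) ⬝ᵥ v := by
  have ht : ∑ i, γ i * Y i * t = 0 := by rw [← Finset.sum_mul, hγY, zero_mul]
  simp only [sum_dotProduct, smul_dotProduct, smul_eq_mul, ← Finset.sum_sub_distrib]
  rw [← sub_zero (∑ i, _), ← ht, ← Finset.sum_sub_distrib]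
  exact Finset.sum_congr rfl fun i _ => by ring

theorem exists_mem_hingeSubdiff_sum_le (hS : S.IsSymm) (hc : 0 ≤ c) {v₀ : κ → ℝ} {t₀ : ℝ}
    (hmin : ∀ v t, hingeObjective Q c S m Y v₀ t₀ ≤ hingeObjective Q c S m Y v t)
    (w : κ → ℝ) (s : ℝ) :
    ∃ β : ι → ℝ, (∀ i, β i ∈ hingeSubdiff c (1 - Y i * (m i ⬝ᵥ v₀ - t₀))) ∧
      ∑ i, β i * (Y i * (m i ⬝ᵥ w + s)) ≤ 2 * Q * (S *ᵥ v₀ ⬝ᵥ w) := by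
  choose β hβ hexp using fun i => exists_mem_hingeSubdiff_eventually_eq hc
    (1 - Y i * (m i ⬝ᵥ v₀ - t₀)) (-(Y i * (m i ⬝ᵥ w + s)))
  refine ⟨β, hβ, sub_nonneg.1 ?_⟩
  refine nonneg_of_eventually_nonneg_mul_add_sq (B := Q * (w ⬝ᵥ S *ᵥ w)) ?_
  filter_upwards [eventually_all.2 hexp] with ε hε
  have h := hmin (v₀ + ε • w) (t₀ - ε * s)
  have harg : ∀ i, 1 - Y i * (m i ⬝ᵥ (v₀ + ε • w) - (t₀ - ε * s)) =
      1 - Y i * (m i ⬝ᵥ v₀ - t₀) + ε * -(Y i * (m i ⬝ᵥ w + s)) := fun i => by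
    simp only [dotProduct_add, dotProduct_smul, smul_eq_mul]; ring
  have hhinge : c * ∑ i, max (1 - Y i * (m i ⬝ᵥ (v₀ + ε • w) - (t₀ - ε * s))) 0 =
      c * ∑ i, max (1 - Y i * (m i ⬝ᵥ v₀ - t₀)) 0 - ε * ∑ i, β i * (Y i * (m i ⬝ᵥ w + s)) := by
    simp only [Finset.mul_sum, ← Finset.sum_sub_distrib, harg, hε]
    exact Finset.sum_congr rfl fun i _ => by ring
  rw [hingeObjective, hingeObjective, hhinge, hS.add_smul_dotProduct_mulVec_add_smul] at h
  linarith

variable [DecidableEq κ]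

theorem exists_hinge_kkt (hS : S.IsSymm) (hc : 0 ≤ c) {v₀ : κ → ℝ} {t₀ : ℝ}
    (hmin : ∀ v t, hingeObjective Q c S m Y v₀ t₀ ≤ hingeObjective Q c S m Y v t) :
    ∃ β : ι → ℝ, (∀ i, β i ∈ hingeSubdiff c (1 - Y i * (m i ⬝ᵥ v₀ - t₀))) ∧
      ∑ i, β i * Y i = 0 ∧ ∑ i, (β i * Y i) • m i = (2 * Q) • S *ᵥ v₀ := by
  set box := Set.univ.pi fun i => hingeSubdiff c (1 - Y i * (m i ⬝ᵥ v₀ - t₀))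
  set T := Fintype.linearCombination ℝ fun i => (Y i • m i, Y i)
  have hT (β : ι → ℝ) : T β = (∑ i, (β i * Y i) • m i, ∑ i, β i * Y i) := by
    refine Prod.ext ?_ ?_ <;>
      simp [T, Fintype.linearCombination_apply, Prod.fst_sum, Prod.snd_sum, smul_smul, mul_comm]
  suffices ((2 * Q) • S *ᵥ v₀, 0) ∈ T '' box by
    obtain ⟨β, hβ, hTβ⟩ := this
    rw [hT, Prod.ext_iff] at hTβ
    exact ⟨β, fun i => hβ i trivial, hTβ.2, hTβ.1⟩
  have hconvex : Convex ℝ (T '' box) :=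
    (convex_pi fun i _ => convex_Icc _ _).linear_image T
  have hclosed : IsClosed (T '' box) :=
    ((isCompact_univ_pi fun i => isCompact_Icc).image T.continuous_of_finiteDimensional).isClosed
  rw [← iInter_halfSpaces_eq hconvex hclosed, Set.mem_iInter]
  intro φ
  obtain ⟨w, s, hφ⟩ := exists_prod_apply_eq_dotProduct_add (-φ : StrongDual ℝ _).toLinearMap
  obtain ⟨β, hβ, hle⟩ := exists_mem_hingeSubdiff_sum_le hS hc hmin w s
  refine ⟨T β, ⟨β, fun i _ => hβ i, rfl⟩, ?_⟩
  have hφ' (z : κ → ℝ) (a : ℝ) : -φ (z, a) = z ⬝ᵥ w + a * s := hφ z a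
  rw [← neg_le_neg_iff, hT, hφ', hφ', sum_dotProduct]
  simp only [smul_dotProduct, smul_eq_mul, zero_mul, add_zero, Finset.sum_mul,
    ← Finset.sum_add_distrib] at hle ⊢
  convert hle using 1
  exact Finset.sum_congr rfl fun i _ => by ring

variable (Q S m Y) in
def hingeDual (γ : ι → ℝ) : ℝ :=
  -∑ i, γ i + (4 * Q)⁻¹ * ((∑ i, (γ i * Y i) • m i) ⬝ᵥ S⁻¹ *ᵥ ∑ i, (γ i * Y i) • m i)

theorem neg_hingeDual_le_hingeObjective (hS : S.PosDef) (hQ : 0 < Q) {γ : ι → ℝ}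
    (hγ : ∀ i, γ i ∈ Set.Icc 0 c) (hγY : ∑ i, γ i * Y i = 0) (v : κ → ℝ) (t : ℝ) :
    -hingeDual Q S m Y γ ≤ hingeObjective Q c S m Y v t := by
  have hhinge : ∑ i, γ i * (1 - Y i * (m i ⬝ᵥ v - t)) ≤
      c * ∑ i, max (1 - Y i * (m i ⬝ᵥ v - t)) 0 := by
    rw [Finset.mul_sum]
    exact Finset.sum_le_sum fun i _ => mul_le_mul_max_zero (hγ i)
  rw [sum_mul_hinge_arg_eq hγY] at hhinge
  have hquad := dotProduct_sub_mul_dotProduct_mulVec_le hS hQ v (∑ i, (γ i * Y i) • m i)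
  rw [hingeDual, hingeObjective]
  linarith

theorem hingeDual_eq_neg_hingeObjective (hS : IsUnit S.det) {v₀ : κ → ℝ} {t₀ : ℝ}
    {β : ι → ℝ} (hβ : ∀ i, β i ∈ hingeSubdiff c (1 - Y i * (m i ⬝ᵥ v₀ - t₀)))
    (hβY : ∑ i, β i * Y i = 0) (hstat : ∑ i, (β i * Y i) • m i = (2 * Q) • S *ᵥ v₀) :
    hingeDual Q S m Y β = -hingeObjective Q c S m Y v₀ t₀ := by
  have hslack : c * ∑ i, max (1 - Y i * (m i ⬝ᵥ v₀ - t₀)) 0 =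
      ∑ i, β i - 2 * Q * (v₀ ⬝ᵥ S *ᵥ v₀) := by
    rw [Finset.mul_sum, ← Finset.sum_congr rfl fun i _ => mul_eq_of_mem_hingeSubdiff (hβ i),
      sum_mul_hinge_arg_eq hβY, hstat, smul_dotProduct, dotProduct_comm, smul_eq_mul]
  rw [hingeDual, hingeObjective, hslack, hstat, mulVec_smul, mulVec_mulVec,
    nonsing_inv_mul _ hS, one_mulVec, smul_dotProduct, dotProduct_smul, dotProduct_comm,
    smul_eq_mul, smul_eq_mul]
  field_simp
  ring

theorem eq_smul_sum_smul_inv_mulVec (hS : IsUnit S.det) (hQ : Q ≠ 0) {v₀ : κ → ℝ}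
    {β : ι → ℝ} (hstat : ∑ i, (β i * Y i) • m i = (2 * Q) • S *ᵥ v₀) :
    v₀ = (2 * Q)⁻¹ • ∑ i, (β i * Y i) • S⁻¹ *ᵥ m i := by
  simp_rw [← mulVec_smul, ← mulVec_sum]
  rw [hstat, mulVec_smul, mulVec_mulVec, nonsing_inv_mul _ hS, one_mulVec, smul_smul,
    inv_mul_cancel₀ (mul_ne_zero two_ne_zero hQ), one_smul]

end HingeProgram

theorem bilin_eq_dotProduct_mulVec {d₁ d₂ : ℕ} (u : Fin d₁ → ℝ) (M : Matrix (Fin d₁) (Fin d₂) ℝ)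
    (v : Fin d₂ → ℝ) : bilin u M v = u ⬝ᵥ M *ᵥ v := by
  simp [bilin, dotProduct, mulVec, Finset.mul_sum, mul_assoc]

theorem bilin_eq_transpose_mulVec_dotProduct {d₁ d₂ : ℕ} (u : Fin d₁ → ℝ)
    (M : Matrix (Fin d₁) (Fin d₂) ℝ) (v : Fin d₂ → ℝ) : bilin u M v = Mᵀ *ᵥ u ⬝ᵥ v := by
  rw [bilin_eq_dotProduct_mulVec, dotProduct_mulVec, mulVec_transpose]

theorem dualObjV_eq_hingeDual {n d₁ d₂ : ℕ} (Sr : Matrix (Fin d₁) (Fin d₁) ℝ)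
    (Sc : Matrix (Fin d₂) (Fin d₂) ℝ) (X : Fin n → Matrix (Fin d₁) (Fin d₂) ℝ)
    (Ytil : Fin n → ℝ) (u : Fin d₁ → ℝ) (γ : Fin n → ℝ) :
    dualObjV Sr Sc X Ytil u γ =
      hingeDual (bilin u Sr u) Sc (fun i => (X i - sampleMean X)ᵀ *ᵥ u) Ytil γ := by
  simp only [dualObjV, hingeDual, sum_dotProduct, mulVec_sum, dotProduct_sum, mulVec_smul,
    smul_dotProduct, dotProduct_smul, smul_eq_mul, Finset.mul_sum]
  rw [Finset.sum_comm]
  exact congrArg _ (Finset.sum_congr rfl fun _ _ => Finset.sum_congr rfl fun _ _ => by ring)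

theorem stmt_12_general {n d₁ d₂ : ℕ}
    (Sr : Matrix (Fin d₁) (Fin d₁) ℝ) (Sc : Matrix (Fin d₂) (Fin d₂) ℝ)
    (hSr : Sr.PosDef) (hSc : Sc.PosDef)
    (X : Fin n → Matrix (Fin d₁) (Fin d₂) ℝ)
    (Ytil : Fin n → ℝ)
    (lam : ℝ) (hlam : 0 < lam)
    (u : Fin d₁ → ℝ) (hu : u ≠ 0)
    (vstar : Fin d₂ → ℝ) (tstar : ℝ)
    (hmin : ∀ (v : Fin d₂ → ℝ) (t : ℝ),
      bilin u Sr u * bilin vstar Sc vstar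
          + lam / n * ∑ i, max (1 - Ytil i * (bilin u (X i - sampleMean X) vstar - tstar)) 0
        ≤ bilin u Sr u * bilin v Sc v
          + lam / n * ∑ i, max (1 - Ytil i * (bilin u (X i - sampleMean X) v - t)) 0) :
    ∃ β : Fin n → ℝ,
      (∀ i, 0 ≤ β i ∧ β i ≤ lam / n) ∧
      (∑ i, β i * Ytil i = 0) ∧
      vstar = (2 * bilin u Sr u)⁻¹ •
        ∑ i, (β i * Ytil i) • (Sc⁻¹.mulVec ((X i - sampleMean X)ᵀ.mulVec u)) ∧
      (∀ γ : Fin n → ℝ, (∀ i, 0 ≤ γ i ∧ γ i ≤ lam / n) → (∑ i, γ i * Ytil i = 0) →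
        dualObjV Sr Sc X Ytil u β ≤ dualObjV Sr Sc X Ytil u γ) := by
  set m : Fin n → Fin d₂ → ℝ := fun i => (X i - sampleMean X)ᵀ *ᵥ u
  have hQ : 0 < bilin u Sr u := by
    rw [bilin_eq_dotProduct_mulVec]; exact hSr.dotProduct_mulVec_pos hu
  have hc : 0 ≤ lam / n := by positivity
  have hdet : IsUnit Sc.det := isUnit_iff_ne_zero.2 hSc.det_pos.ne'
  have hprimal (v : Fin d₂ → ℝ) (t : ℝ) :
      hingeObjective (bilin u Sr u) (lam / n) Sc m Ytil vstar tstar ≤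
        hingeObjective (bilin u Sr u) (lam / n) Sc m Ytil v t := by
    rw [hingeObjective, hingeObjective]
    simpa only [bilin_eq_transpose_mulVec_dotProduct u (X _ - _),
      bilin_eq_dotProduct_mulVec _ Sc] using hmin v t
  obtain ⟨β, hβ, hβY, hstat⟩ :=
    exists_hinge_kkt (isHermitian_iff_isSymm.1 hSc.isHermitian) hc hprimal
  refine ⟨β, fun i => hingeSubdiff_subset_Icc hc _ (hβ i), hβY,
    eq_smul_sum_smul_inv_mulVec hdet hQ.ne' hstat, fun γ hγ hγY => ?_⟩
  rw [dualObjV_eq_hingeDual, dualObjV_eq_hingeDual,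
    hingeDual_eq_neg_hingeObjective hdet hβ hβY hstat]
  exact neg_le.1 (neg_hingeDual_le_hingeObjective hSc hQ hγ hγY vstar tstar)

/-- **Theorem 2, part 2 (dual characterization of the `v`-update).** If `(v*, t*)` minimizes
the PSMM objective in `(v, t)` for fixed `u ≠ 0`, then there is a dual-feasible `β` with
`v* = (1/2) Σᵢ (βᵢỸᵢ) Σ_c⁻¹(Xᵢ−X̄)ᵀu / (uᵀΣ_r u)` minimizing the dual objective. -/
theorem stmt_12 {n d₁ d₂ : ℕ} (hn : 0 < n)
    (Sr : Matrix (Fin d₁) (Fin d₁) ℝ) (Sc : Matrix (Fin d₂) (Fin d₂) ℝ)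
    (hSr : Sr.PosDef) (hSc : Sc.PosDef)
    (X : Fin n → Matrix (Fin d₁) (Fin d₂) ℝ)
    (Ytil : Fin n → ℝ) (hYtil : ∀ i, Ytil i = -1 ∨ Ytil i = 1)
    (lam : ℝ) (hlam : 0 < lam)
    (u : Fin d₁ → ℝ) (hu : u ≠ 0)
    (vstar : Fin d₂ → ℝ) (tstar : ℝ)
    (hmin : ∀ (v : Fin d₂ → ℝ) (t : ℝ),
      bilin u Sr u * bilin vstar Sc vstar
          + lam / n * ∑ i, max (1 - Ytil i * (bilin u (X i - sampleMean X) vstar - tstar)) 0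
        ≤ bilin u Sr u * bilin v Sc v
          + lam / n * ∑ i, max (1 - Ytil i * (bilin u (X i - sampleMean X) v - t)) 0) :
    ∃ β : Fin n → ℝ,
      (∀ i, 0 ≤ β i ∧ β i ≤ lam / n) ∧
      (∑ i, β i * Ytil i = 0) ∧
      vstar = (2 * bilin u Sr u)⁻¹ •
        ∑ i, (β i * Ytil i) • (Sc⁻¹.mulVec ((X i - sampleMean X)ᵀ.mulVec u)) ∧
      (∀ γ : Fin n → ℝ, (∀ i, 0 ≤ γ i ∧ γ i ≤ lam / n) → (∑ i, γ i * Ytil i = 0) →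
        dualObjV Sr Sc X Ytil u β ≤ dualObjV Sr Sc X Ytil u γ) :=
  stmt_12_general Sr Sc hSr hSc X Ytil lam hlam u hu vstar tstar hmin
end
end
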